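/- arXiv:0710.3817 — 2 statements merged into one kernel-verified Lean document; each statement's English description precedes it below -/
import Mathlib

section
/- (Comparison of dichotomies: zonotope inclusion is equivalent to domination of upper boundary functions.) Let A be a 2×n row-stochastic matrix and B a 2×m row-stochastic matrix, with zonotopes Z(A) = {Σⱼ δⱼ aⱼ : δ ∈ [0,1]ⁿ} and Z(B) = {Σⱼ εⱼ bⱼ : ε ∈ [0,1]ᵐ}. Then Z(B) ⊆ Z(A) if and only if for every x ∈ [0,1], sup{y : (x,y) ∈ Z(B)} ≤ sup{y : (x,y) ∈ Z(A)}. -/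
open Matrix Finset

/-- A real matrix is row-stochastic if it has nonnegative entries and each row sums to 1. -/
def RowStochastic {n m : ℕ} (A : Matrix (Fin n) (Fin m) ℝ) : Prop :=
  (∀ i j, 0 ≤ A i j) ∧ ∀ i, ∑ j, A i j = 1

/-- The zonotope of a `2 × n` matrix `A`: all combinations `∑ⱼ δⱼ aⱼ` of the columns `aⱼ`
of `A` with coefficients `δⱼ ∈ [0,1]`; equivalently the Minkowski sum of the segments
`conv(0, aⱼ)`. -/
def zonotope {n : ℕ} (A : Matrix (Fin 2) (Fin n) ℝ) : Set (Fin 2 → ℝ) :=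
  {z | ∃ δ : Fin n → ℝ, (∀ j, δ j ∈ Set.Icc (0 : ℝ) 1) ∧
    z = ∑ j : Fin n, δ j • (fun i : Fin 2 => A i j)}

/-!
For a row-stochastic `A`, the zonotope `Z(A)` is compact, convex and invariant under the
point reflection `z ↦ 1 - z` (replace `δ` by `1 - δ`). Hence its vertical slice over `x` is the
interval `[1 - β_A(1 - x), β_A(x)]`: the lower boundary is the reflected upper one. Domination
`β_B ≤ β_A`, used at `x` and at `1 - x`, therefore nests every slice of `Z(B)` in the
corresponding slice of `Z(A)`.
-/

def verticalSlice (S : Set (Fin 2 → ℝ)) (x : ℝ) : Set ℝ := {y | ![x, y] ∈ S}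

section Slice

variable {S T : Set (Fin 2 → ℝ)} {x y : ℝ}

theorem mem_verticalSlice : y ∈ verticalSlice S x ↔ ![x, y] ∈ S := Iff.rfl

theorem verticalSlice_mono (h : S ⊆ T) : verticalSlice S x ⊆ verticalSlice T x :=
  fun _ hy => h hy

theorem convex_verticalSlice (hS : Convex ℝ S) (x : ℝ) : Convex ℝ (verticalSlice S x) := by
  intro y₁ h₁ y₂ h₂ a b ha hb hab
  have key : a • ![x, y₁] + b • ![x, y₂] = ![x, a • y₁ + b • y₂] := by
    ext i
    fin_cases i
    · simp [← add_mul, hab]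
    · simp
  simpa only [mem_verticalSlice, key] using hS h₁ h₂ ha hb hab

theorem isCompact_verticalSlice (hS : IsCompact S) (x : ℝ) : IsCompact (verticalSlice S x) := by
  have hclosed : IsClosed (verticalSlice S x) :=
    hS.isClosed.preimage (by fun_prop : Continuous fun y : ℝ => ![x, y])
  exact (hS.image (continuous_apply 1)).of_isClosed_subset hclosed fun y hy => ⟨_, hy, rfl⟩

theorem one_sub_mem_verticalSlice (hS : ∀ z ∈ S, 1 - z ∈ S) (hy : y ∈ verticalSlice S x) :
    1 - y ∈ verticalSlice S (1 - x) := by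
  have key : (1 : Fin 2 → ℝ) - ![x, y] = ![1 - x, 1 - y] := by
    ext i
    fin_cases i <;> rfl
  simpa only [mem_verticalSlice, key] using hS _ hy

theorem mem_verticalSlice_iff_of_one_sub_mem (hconv : Convex ℝ S) (hcpt : IsCompact S)
    (hS : ∀ z ∈ S, 1 - z ∈ S) (hne : (verticalSlice S x).Nonempty) :
    y ∈ verticalSlice S x ↔
      1 - sSup (verticalSlice S (1 - x)) ≤ y ∧ y ≤ sSup (verticalSlice S x) := by
  have hbdd : ∀ x', BddAbove (verticalSlice S x') :=
    fun x' => (isCompact_verticalSlice hcpt x').bddAbove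
  constructor
  · intro hy
    have hreflected := le_csSup (hbdd _) (one_sub_mem_verticalSlice hS hy)
    exact ⟨by linarith, le_csSup (hbdd _) hy⟩
  · rintro ⟨hlow, hup⟩
    have hne' : (verticalSlice S (1 - x)).Nonempty :=
      hne.elim fun y hy => ⟨_, one_sub_mem_verticalSlice hS hy⟩
    have hlow_mem : 1 - sSup (verticalSlice S (1 - x)) ∈ verticalSlice S x := by
      simpa using one_sub_mem_verticalSlice hS ((isCompact_verticalSlice hcpt _).sSup_mem hne')
    have hup_mem := (isCompact_verticalSlice hcpt x).sSup_mem hne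
    exact (convex_verticalSlice hconv x).ordConnected.out hlow_mem hup_mem ⟨hlow, hup⟩

end Slice

section Zonotope

variable {n : ℕ} {A : Matrix (Fin 2) (Fin n) ℝ}

theorem mem_zonotope_iff {z : Fin 2 → ℝ} :
    z ∈ zonotope A ↔ ∃ δ : Fin n → ℝ, (∀ j, δ j ∈ Set.Icc (0 : ℝ) 1) ∧
      ∀ i, z i = ∑ j, δ j * A i j := by
  simp only [zonotope, Set.mem_ofPred_eq, funext_iff, Finset.sum_apply, Pi.smul_apply,
    smul_eq_mul]

theorem isCompact_zonotope : IsCompact (zonotope A) := by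
  have himage : zonotope A =
      (fun δ : Fin n → ℝ => ∑ j, δ j • fun i => A i j) '' Set.Icc 0 1 := by
    ext z
    constructor
    · rintro ⟨δ, hδ, rfl⟩
      exact ⟨δ, ⟨fun j => (hδ j).1, fun j => (hδ j).2⟩, rfl⟩
    · rintro ⟨δ, ⟨h₀, h₁⟩, rfl⟩
      exact ⟨δ, fun j => ⟨h₀ j, h₁ j⟩, rfl⟩
  rw [himage]
  exact isCompact_Icc.image (by fun_prop)

theorem convex_zonotope : Convex ℝ (zonotope A) := by
  rintro _ ⟨δ, hδ, rfl⟩ _ ⟨ε, hε, rfl⟩ a b ha hb hab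
  refine ⟨a • δ + b • ε, fun j => ?_, ?_⟩
  · exact convex_Icc (0 : ℝ) 1 (hδ j) (hε j) ha hb hab
  · simp only [Finset.smul_sum, smul_smul, ← Finset.sum_add_distrib, Pi.add_apply,
      Pi.smul_apply, smul_eq_mul, add_smul]

theorem RowStochastic.one_sub_mem_zonotope (hA : RowStochastic A) {z : Fin 2 → ℝ}
    (hz : z ∈ zonotope A) : 1 - z ∈ zonotope A := by
  obtain ⟨δ, hδ, hz⟩ := mem_zonotope_iff.1 hz
  refine mem_zonotope_iff.2 ⟨1 - δ, fun j => ?_, fun i => ?_⟩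
  · exact ⟨sub_nonneg.2 (hδ j).2, sub_le_self 1 (hδ j).1⟩
  · simp only [Pi.sub_apply, Pi.one_apply, sub_mul, one_mul, Finset.sum_sub_distrib, hA.2 i,
      hz i]

theorem RowStochastic.diag_mem_zonotope (hA : RowStochastic A) {x : ℝ}
    (hx : x ∈ Set.Icc (0 : ℝ) 1) : ![x, x] ∈ zonotope A := by
  refine mem_zonotope_iff.2 ⟨fun _ => x, fun _ => hx, fun i => ?_⟩
  rw [← Finset.mul_sum, hA.2 i, mul_one]
  fin_cases i <;> rfl

theorem RowStochastic.mem_Icc_of_mem_zonotope (hA : RowStochastic A) {z : Fin 2 → ℝ}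
    (hz : z ∈ zonotope A) (i : Fin 2) : z i ∈ Set.Icc (0 : ℝ) 1 := by
  obtain ⟨δ, hδ, hz⟩ := mem_zonotope_iff.1 hz
  rw [hz i, ← hA.2 i]
  exact ⟨Finset.sum_nonneg fun j _ => mul_nonneg (hδ j).1 (hA.1 i j),
    Finset.sum_le_sum fun j _ => mul_le_of_le_one_left (hA.1 i j) (hδ j).2⟩

theorem RowStochastic.mem_verticalSlice_zonotope_iff (hA : RowStochastic A) {x y : ℝ}
    (hx : x ∈ Set.Icc (0 : ℝ) 1) :
    y ∈ verticalSlice (zonotope A) x ↔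
      1 - sSup (verticalSlice (zonotope A) (1 - x)) ≤ y ∧
        y ≤ sSup (verticalSlice (zonotope A) x) :=
  mem_verticalSlice_iff_of_one_sub_mem convex_zonotope isCompact_zonotope
    (fun _ => hA.one_sub_mem_zonotope) ⟨x, hA.diag_mem_zonotope hx⟩

end Zonotope

/-- Comparison of dichotomies: zonotope inclusion is equivalent to pointwise domination of
the upper boundary functions on `[0,1]`. -/
theorem zonotope_subset_iff_upper_boundary_le
    (n m : ℕ) (A : Matrix (Fin 2) (Fin n) ℝ) (B : Matrix (Fin 2) (Fin m) ℝ)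
    (hA : RowStochastic A) (hB : RowStochastic B) :
    zonotope B ⊆ zonotope A ↔
      ∀ x ∈ Set.Icc (0 : ℝ) 1,
        sSup {y : ℝ | ![x, y] ∈ zonotope B} ≤ sSup {y : ℝ | ![x, y] ∈ zonotope A} := by
  constructor
  · intro hsub x hx
    exact csSup_le_csSup (isCompact_verticalSlice isCompact_zonotope x).bddAbove
      ⟨x, hB.diag_mem_zonotope hx⟩ (verticalSlice_mono hsub)
  · intro hle z hz
    obtain ⟨x, y, rfl⟩ : ∃ x y, z = ![x, y] := ⟨z 0, z 1, by ext i; fin_cases i <;> rfl⟩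
    have hx : x ∈ Set.Icc (0 : ℝ) 1 := hB.mem_Icc_of_mem_zonotope hz 0
    have hx' : 1 - x ∈ Set.Icc (0 : ℝ) 1 := ⟨by linarith [hx.2], by linarith [hx.1]⟩
    obtain ⟨hlow, hup⟩ := (hB.mem_verticalSlice_zonotope_iff hx).1 hz
    have hle' : sSup (verticalSlice (zonotope B) (1 - x)) ≤
        sSup (verticalSlice (zonotope A) (1 - x)) := hle _ hx'
    exact (hA.mem_verticalSlice_zonotope_iff hx).2 ⟨by linarith, hup.trans (hle x hx)⟩
end

section
/- (Per-bit code comparison.) Let Ẽ = (ẽ_{jk}) and F̃ = (f̃_{jk}) be 2×w and 2×v row-stochastic matrices (the equivalent transfer matrices of two codes for the r-th information bit). Suppose that for every x ∈ [0,1], sup{Σⱼ ẽ_{2j} δⱼ : δ ∈ [0,1]ʷ, Σⱼ ẽ_{1j} δⱼ ≤ x} ≥ sup{Σⱼ f̃_{2j} εⱼ : ε ∈ [0,1]ᵛ, Σⱼ f̃_{1j} εⱼ ≤ x}. Then there exists a w×v row-stochastic matrix M with Ẽ M = F̃, and consequently for every row-stochastic v×2 decision matrix R there exists a row-stochastic w×2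 decision matrix S such that for each bit value i ∈ {0,1}, the error probability Σ_{k} ẽ_{ik} · S k (1−i)' of decoding bit value i from Ẽ with S is at most the error probability Σ_{k} f̃_{ik} · R k (1−i)' of decoding it from F̃ with R (where (1−i)' denotes the wrong decision). -/
/-!
By the Hahn–Banach theorem, `E` majorizes `F` as soon as observing `E` is worth at least as much
as observing `F` in every finite decision problem (Blackwell). For a dichotomy the Bayes value
of a decision problem is `∑ⱼ (e₀ⱼ + e₁ⱼ) g(tⱼ)`, where `tⱼ = e₁ⱼ / (e₀ⱼ + e₁ⱼ)` is the posterior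
of the observation `j` and `g` is a maximum of affine functions. On the finitely many posteriors
that occur, a convex `g` agrees with an affine function plus a nonnegative combination of hinges
`(t - r)⁺`, so it suffices to compare the hinge sums `∑ⱼ (e₁ⱼ - r (e₀ⱼ + e₁ⱼ))⁺`. Such a sum is
the value of the likelihood-ratio test with threshold `r`, which the domination of the
Neyman–Pearson curves controls. Decoders are then transported along `M`: `S = M R` has exactly
the error probabilities of `R`.
-/

open Matrix Finset

lemma RowStochastic.mul {n m p : ℕ} {A : Matrix (Fin n) (Fin m) ℝ} {B : Matrix (Fin m) (Fin p) ℝ}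
    (hA : RowStochastic A) (hB : RowStochastic B) : RowStochastic (A * B) := by
  refine ⟨fun i k => ?_, fun i => ?_⟩
  · rw [mul_apply]; exact sum_nonneg fun j _ => mul_nonneg (hA.1 i j) (hB.1 j k)
  · simp only [mul_apply]
    rw [sum_comm]
    simp [← mul_sum, hB.2, hA.2]

lemma convex_setOf_rowStochastic (n m : ℕ) :
    Convex ℝ {A : Matrix (Fin n) (Fin m) ℝ | RowStochastic A} := by
  rintro A hA B hB a b ha hb hab
  refine ⟨fun i j => ?_, fun i => ?_⟩
  · simp only [Matrix.add_apply, Matrix.smul_apply, smul_eq_mul]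
    have := hA.1 i j; have := hB.1 i j; positivity
  · simp [sum_add_distrib, ← mul_sum, hA.2, hB.2, hab]

lemma isCompact_setOf_rowStochastic (n m : ℕ) :
    IsCompact {A : Matrix (Fin n) (Fin m) ℝ | RowStochastic A} := by
  have hbox : IsCompact (Set.univ.pi fun _ : Fin n => Set.univ.pi fun _ : Fin m =>
      Set.Icc (0 : ℝ) 1) :=
    isCompact_univ_pi fun _ => isCompact_univ_pi fun _ => isCompact_Icc
  refine hbox.of_isClosed_subset ?_ fun A hA i _ j _ =>
    ⟨hA.1 i j, hA.2 i ▸ single_le_sum (fun k _ => hA.1 i k) (mem_univ j)⟩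
  show IsClosed ({A : Matrix _ _ ℝ | ∀ i j, 0 ≤ A i j} ∩ {A | ∀ i, ∑ j, A i j = 1})
  simp only [Set.ofPred_forall]
  exact .inter (isClosed_iInter fun i => isClosed_iInter fun j =>
      isClosed_le continuous_const ((continuous_apply j).comp (continuous_apply i)))
    (isClosed_iInter fun i => isClosed_eq
      (continuous_finsetSum _ fun j _ => (continuous_apply j).comp (continuous_apply i))
      continuous_const)

lemma LinearMap.apply_matrix_eq_sum {m n : ℕ} (f : Matrix (Fin m) (Fin n) ℝ →ₗ[ℝ] ℝ)
    (X : Matrix (Fin m) (Fin n) ℝ) : f X = ∑ i, ∑ k, f (Matrix.single i k 1) * X i k := by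
  conv_lhs => rw [matrix_eq_sum_single X]
  simp only [map_sum]
  refine sum_congr rfl fun i _ => sum_congr rfl fun k _ => ?_
  rw [show Matrix.single i k (X i k) = X i k • Matrix.single i k (1 : ℝ) by simp, map_smul,
    smul_eq_mul, mul_comm]

-- not found through the type synonym `Matrix`
instance Matrix.instLocallyConvexSpace {m n : ℕ} :
    LocallyConvexSpace ℝ (Matrix (Fin m) (Fin n) ℝ) :=
  inferInstanceAs (LocallyConvexSpace ℝ (Fin m → Fin n → ℝ))

/-- `m` times the optimal expected payoff, under the uniform prior on the `m` rows (states) of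
`E`, of observing `E` and then taking an action `d` that pays `C i d` in state `i`. -/
noncomputable def bayesValue {m w : ℕ} {D : Type*} [Fintype D] [Nonempty D]
    (E : Matrix (Fin m) (Fin w) ℝ) (C : Matrix (Fin m) D ℝ) : ℝ :=
  ∑ j, univ.sup' univ_nonempty fun d => ∑ i, C i d * E i j

lemma sum_mul_le_bayesValue {m v : ℕ} [Nonempty (Fin v)] (F C : Matrix (Fin m) (Fin v) ℝ) :
    ∑ i, ∑ k, C i k * F i k ≤ bayesValue F C := by
  rw [Finset.sum_comm]
  exact sum_le_sum fun k _ => le_sup' (fun d => ∑ i, C i d * F i k) (mem_univ k)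

lemma exists_rowStochastic_sum_mul_eq_bayesValue {m w v : ℕ} [Nonempty (Fin v)]
    (E : Matrix (Fin m) (Fin w) ℝ) (C : Matrix (Fin m) (Fin v) ℝ) :
    ∃ M : Matrix (Fin w) (Fin v) ℝ, RowStochastic M ∧
      ∑ i, ∑ k, C i k * (E * M) i k = bayesValue E C := by
  choose κ hκ using fun j => exists_mem_eq_sup' univ_nonempty fun d => ∑ i, C i d * E i j
  set M : Matrix (Fin w) (Fin v) ℝ := of fun j => Pi.single (κ j) 1
  have hrow : ∀ i, ∑ k, C i k * (E * M) i k = ∑ j, C i (κ j) * E i j := fun i => by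
    simp only [mul_apply, mul_sum]
    rw [Finset.sum_comm]
    simp [M, Pi.single_apply, mul_comm]
  refine ⟨M, ⟨fun j k => ?_, fun j => by simp [M]⟩, ?_⟩
  · simp only [M, of_apply, Pi.single_apply]
    positivity
  · simp only [hrow, bayesValue, fun j => (hκ j).2]
    exact Finset.sum_comm

theorem exists_rowStochastic_mul_eq_of_bayesValue_le {m w v : ℕ} [Nonempty (Fin v)]
    (E : Matrix (Fin m) (Fin w) ℝ) (F : Matrix (Fin m) (Fin v) ℝ)
    (h : ∀ C : Matrix (Fin m) (Fin v) ℝ, bayesValue F C ≤ bayesValue E C) :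
    ∃ M : Matrix (Fin w) (Fin v) ℝ, RowStochastic M ∧ E * M = F := by
  set K := mulLeftLinearMap (Fin v) ℝ E '' {M | RowStochastic M}
  have hKcompact : IsCompact K := (isCompact_setOf_rowStochastic w v).image
    (continuous_const.matrix_mul continuous_id)
  have hKconvex : Convex ℝ K := (convex_setOf_rowStochastic w v).linear_image _
  by_contra! hF
  obtain ⟨f, u, hK, hFu⟩ := geometric_hahn_banach_closed_point hKconvex hKcompact.isClosed
    (by rintro ⟨M, hM, hEM⟩; exact hF M hM hEM)
  set C : Matrix (Fin m) (Fin v) ℝ := of fun i k => f (single i k 1)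
  have hf : ∀ X, f X = ∑ i, ∑ k, C i k * X i k := LinearMap.apply_matrix_eq_sum f.toLinearMap
  obtain ⟨M, hM, hEM⟩ := exists_rowStochastic_sum_mul_eq_bayesValue E C
  have hMu := hK (E * M) ⟨M, hM, rfl⟩
  rw [hf, hEM] at hMu
  rw [hf] at hFu
  linarith [sum_mul_le_bayesValue F C, h C]

theorem ConvexOn.finset_sup' {𝕜 E β ι : Type*} [Semiring 𝕜] [PartialOrder 𝕜] [AddCommMonoid E]
    [AddCommMonoid β] [LinearOrder β] [IsOrderedAddMonoid β] [SMul 𝕜 E] [Module 𝕜 β]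
    [PosSMulStrictMono 𝕜 β] {s : Set E} {t : Finset ι} (ht : t.Nonempty) {f : ι → E → β}
    (hf : ∀ i ∈ t, ConvexOn 𝕜 s (f i)) : ConvexOn 𝕜 s fun x => t.sup' ht fun i => f i x := by
  simp_rw [← Finset.sup'_apply]
  exact Finset.sup'_induction ht f (fun _ h₁ _ h₂ => h₁.sup h₂) hf

section ConvexOrder

variable {s : Set ℝ} {g : ℝ → ℝ}

theorem ConvexOn.exists_hinge_interpolation_of_isLeast (hg : ConvexOn ℝ s g) {T : Finset ℝ}
    (hT : ↑T ⊆ s) (N : Finset ℝ) (hN : N ⊆ T) (b : ℝ) (hb : IsLeast (N : Set ℝ) b) :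
    ∃ τ : ℝ, ∃ n : ℕ, ∃ c r : Fin n → ℝ, (∀ i, 0 ≤ c i ∧ r i ∈ N) ∧
      (∀ a ∈ T, a < b → (g b - g a) / (b - a) ≤ τ) ∧
      ∀ t ∈ N, g t = g b + τ * (t - b) + ∑ i, c i * max 0 (t - r i) := by
  -- A new least node `b` below the old least node `a` adds a hinge at `a` whose coefficient, the
  -- increase of slope at `a`, is nonnegative by convexity.
  induction N using Finset.induction_on_min generalizing b with
  | empty => exact absurd hb.1 (notMem_empty b)
  | insert a N haN ih =>
    have hab : b = a := by
      rcases mem_insert.1 hb.1 with h | h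
      · exact h
      · exact absurd (hb.2 (mem_insert_self a N)) (haN b h).not_ge
    subst hab
    rcases N.eq_empty_or_nonempty with rfl | hNne
    · obtain ⟨τ, hτ⟩ := (T.image fun a' => (g b - g a') / (b - a')).bddAbove
      refine ⟨τ, 0, Fin.elim0, Fin.elim0, fun i => i.elim0,
        fun a' ha' _ => hτ (mem_coe.2 (mem_image_of_mem _ ha')), fun t ht => ?_⟩
      rw [insert_empty, mem_singleton] at ht
      simp [ht]
    · set a := N.min' hNne
      have haN' : IsLeast (N : Set ℝ) a := N.isLeast_min' hNne
      have hba : b < a := haN a haN'.1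
      obtain ⟨τ, n, c, r, hcr, hτ, hrep⟩ := ih ((subset_insert b N).trans hN) a haN'
      set σ := (g a - g b) / (a - b)
      have hσ : σ * (a - b) = g a - g b := div_mul_cancel₀ _ (sub_ne_zero.2 hba.ne')
      refine ⟨σ, n + 1, Fin.cons (τ - σ) c, Fin.cons a r, fun i => ?_, fun b' hb' hb'b => ?_,
        fun t ht => ?_⟩
      · refine Fin.cases ⟨sub_nonneg.2 (hτ b (hN (mem_insert_self b N)) hba),
          mem_insert_of_mem haN'.1⟩ (fun i => ⟨(hcr i).1, mem_insert_of_mem (hcr i).2⟩) i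
      · exact hg.slope_mono_adjacent (hT (mem_coe.2 hb'))
          (hT (mem_coe.2 (hN (mem_insert_of_mem haN'.1)))) hb'b hba
      · rw [Fin.sum_univ_succ]
        simp only [Fin.cons_zero, Fin.cons_succ]
        rcases mem_insert.1 ht with rfl | htN
        · have hvanish : ∑ i, c i * max 0 (t - r i) = 0 := sum_eq_zero fun i _ => by
            rw [max_eq_left (by linarith [haN (r i) (hcr i).2]), mul_zero]
          rw [hvanish, max_eq_left (by linarith)]
          ring
        · rw [hrep t htN, max_eq_right (by linarith [haN'.2 htN])]
          linear_combination -hσ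

theorem ConvexOn.exists_hinge_interpolation (hg : ConvexOn ℝ s g) {T : Finset ℝ}
    (hT : ↑T ⊆ s) :
    ∃ α β : ℝ, ∃ n : ℕ, ∃ c r : Fin n → ℝ, (∀ i, 0 ≤ c i ∧ r i ∈ T) ∧
      ∀ t ∈ T, g t = α + β * t + ∑ i, c i * max 0 (t - r i) := by
  rcases T.eq_empty_or_nonempty with rfl | hTne
  · exact ⟨0, 0, 0, Fin.elim0, Fin.elim0, fun i => i.elim0, fun t ht => absurd ht (notMem_empty t)⟩
  obtain ⟨τ, n, c, r, hcr, -, hrep⟩ :=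
    hg.exists_hinge_interpolation_of_isLeast hT T subset_rfl _ (T.isLeast_min' hTne)
  exact ⟨g (T.min' hTne) - τ * T.min' hTne, τ, n, c, r, hcr, fun t ht => by rw [hrep t ht]; ring⟩

lemma sum_mul_affine_add_hinge {κ : Type*} [Fintype κ] (w t : κ → ℝ) (α β : ℝ) {n : ℕ}
    (c r : Fin n → ℝ) :
    ∑ k, w k * (α + β * t k + ∑ i, c i * max 0 (t k - r i)) =
      α * ∑ k, w k + β * ∑ k, w k * t k + ∑ i, c i * ∑ k, w k * max 0 (t k - r i) := by
  simp only [mul_add, sum_add_distrib, mul_sum]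
  rw [Finset.sum_comm (s := univ) (t := univ)]
  simp only [mul_left_comm, mul_comm]

theorem ConvexOn.sum_mul_le_sum_mul_of_hinge {ι κ : Type*} [Fintype ι] [Fintype κ]
    (hg : ConvexOn ℝ s g) {w t : ι → ℝ} {w' t' : κ → ℝ} (ht : ∀ i, t i ∈ s) (ht' : ∀ k, t' k ∈ s)
    (hmass : ∑ k, w' k = ∑ i, w i) (hmean : ∑ k, w' k * t' k = ∑ i, w i * t i)
    (hhinge : ∀ r ∈ s, ∑ k, w' k * max 0 (t' k - r) ≤ ∑ i, w i * max 0 (t i - r)) :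
    ∑ k, w' k * g (t' k) ≤ ∑ i, w i * g (t i) := by
  classical
  set T := univ.image t ∪ univ.image t'
  have hTs : ↑T ⊆ s := by
    intro x hx
    rcases mem_union.1 (mem_coe.1 hx) with h | h <;> obtain ⟨_, _, rfl⟩ := mem_image.1 h
    exacts [ht _, ht' _]
  obtain ⟨α, β, n, c, r, hcr, hrep⟩ := hg.exists_hinge_interpolation hTs
  have hmem : ∀ x, (∃ i, t i = x) ∨ (∃ k, t' k = x) → x ∈ T := by simp [T]
  rw [sum_congr rfl fun k _ => congrArg (w' k * ·) (hrep (t' k) (hmem _ (.inr ⟨k, rfl⟩))),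
    sum_congr rfl fun i _ => congrArg (w i * ·) (hrep (t i) (hmem _ (.inl ⟨i, rfl⟩))),
    sum_mul_affine_add_hinge, sum_mul_affine_add_hinge, hmass, hmean]
  gcongr with i
  exacts [(hcr i).1, hhinge (r i) (hTs (hcr i).2)]

end ConvexOrder

section Dichotomy

variable {a b : ℝ}

lemma add_mul_div_add_self (ha : 0 ≤ a) (hb : 0 ≤ b) : (a + b) * (b / (a + b)) = b :=
  mul_div_cancel_of_imp' fun h => by linarith

lemma div_add_self_mem_Icc (ha : 0 ≤ a) (hb : 0 ≤ b) : b / (a + b) ∈ Set.Icc (0 : ℝ) 1 :=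
  ⟨by positivity, div_le_one_of_le₀ (by linarith) (by positivity)⟩

lemma add_mul_max_zero_div_add_sub (ha : 0 ≤ a) (hb : 0 ≤ b) (r : ℝ) :
    (a + b) * max 0 (b / (a + b) - r) = max 0 (b - r * (a + b)) := by
  rw [mul_max_of_nonneg _ _ (by positivity), mul_zero, mul_sub, add_mul_div_add_self ha hb,
    mul_comm]

lemma add_mul_sup'_affine {D : Type*} [Fintype D] [Nonempty D] (C : Matrix (Fin 2) D ℝ)
    (ha : 0 ≤ a) (hb : 0 ≤ b) :
    (a + b) * (univ.sup' univ_nonempty fun d => C 0 d * (1 - b / (a + b)) + C 1 d * (b / (a + b)))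
      = univ.sup' univ_nonempty fun d => C 0 d * a + C 1 d * b := by
  rw [mul₀_sup' (by positivity)]
  refine sup'_congr _ rfl fun d _ => ?_
  linear_combination (C 1 d - C 0 d) * add_mul_div_add_self ha hb

theorem bayesValue_le_bayesValue_of_hinge {w v : ℕ} {D : Type*} [Fintype D] [Nonempty D]
    {E : Matrix (Fin 2) (Fin w) ℝ} {F : Matrix (Fin 2) (Fin v) ℝ}
    (hE : ∀ i j, 0 ≤ E i j) (hF : ∀ i k, 0 ≤ F i k)
    (h0 : ∑ k, F 0 k = ∑ j, E 0 j) (h1 : ∑ k, F 1 k = ∑ j, E 1 j)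
    (hhinge : ∀ r ∈ Set.Icc (0 : ℝ) 1,
      ∑ k, max 0 (F 1 k - r * (F 0 k + F 1 k)) ≤ ∑ j, max 0 (E 1 j - r * (E 0 j + E 1 j)))
    (C : Matrix (Fin 2) D ℝ) : bayesValue F C ≤ bayesValue E C := by
  set g : ℝ → ℝ := fun t => univ.sup' univ_nonempty fun d => C 0 d * (1 - t) + C 1 d * t
  have hg : ConvexOn ℝ (Set.Icc 0 1) g := ConvexOn.finset_sup' _ fun d _ =>
    ⟨convex_Icc 0 1, fun x _ y _ p q _ _ hpq => le_of_eq <| by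
      simp only [smul_eq_mul]; linear_combination (-C 0 d) * hpq⟩
  have hcol : ∀ {n : ℕ} (A : Matrix (Fin 2) (Fin n) ℝ), (∀ i j, 0 ≤ A i j) →
      bayesValue A C = ∑ j, (A 0 j + A 1 j) * g (A 1 j / (A 0 j + A 1 j)) := fun A hA =>
    sum_congr rfl fun j _ => by
      rw [add_mul_sup'_affine C (hA 0 j) (hA 1 j)]
      simp only [Fin.sum_univ_two]
  rw [hcol F hF, hcol E hE]
  refine hg.sum_mul_le_sum_mul_of_hinge (fun j => div_add_self_mem_Icc (hE 0 j) (hE 1 j))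
    (fun k => div_add_self_mem_Icc (hF 0 k) (hF 1 k)) ?_ ?_ fun r hr => ?_
  · simp only [sum_add_distrib, h0, h1]
  · simp only [add_mul_div_add_self (hF 0 _) (hF 1 _), add_mul_div_add_self (hE 0 _) (hE 1 _), h1]
  · simp only [add_mul_max_zero_div_add_sub (hF 0 _) (hF 1 _),
      add_mul_max_zero_div_add_sub (hE 0 _) (hE 1 _)]
    exact hhinge r hr

end Dichotomy

noncomputable def maxPower {n : ℕ} (A : Matrix (Fin 2) (Fin n) ℝ) (x : ℝ) : ℝ :=
  sSup {s : ℝ | ∃ δ : Fin n → ℝ, (∀ j, δ j ∈ Set.Icc (0 : ℝ) 1) ∧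
    (∑ j : Fin n, A 0 j * δ j) ≤ x ∧ s = ∑ j : Fin n, A 1 j * δ j}

section MaxPower

variable {n : ℕ} {A : Matrix (Fin 2) (Fin n) ℝ} {x : ℝ} {δ : Fin n → ℝ}

lemma le_maxPower (hA : ∀ j, 0 ≤ A 1 j) (hδ : ∀ j, δ j ∈ Set.Icc (0 : ℝ) 1)
    (hδx : ∑ j, A 0 j * δ j ≤ x) : ∑ j, A 1 j * δ j ≤ maxPower A x :=
  le_csSup ⟨∑ j, A 1 j, by
    rintro _ ⟨ε, hε, -, rfl⟩
    exact sum_le_sum fun j _ => mul_le_of_le_one_right (hA j) (hε j).2⟩ ⟨δ, hδ, hδx, rfl⟩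

lemma maxPower_le (hx : 0 ≤ x) {y : ℝ}
    (h : ∀ δ : Fin n → ℝ, (∀ j, δ j ∈ Set.Icc (0 : ℝ) 1) → ∑ j, A 0 j * δ j ≤ x →
      ∑ j, A 1 j * δ j ≤ y) : maxPower A x ≤ y :=
  csSup_le ⟨0, 0, fun _ => ⟨le_rfl, zero_le_one⟩, by simpa using hx, by simp⟩
    (by rintro _ ⟨δ, hδ, hδx, rfl⟩; exact h δ hδ hδx)

end MaxPower

lemma sum_mul_le_sum_max_zero {ι : Type*} [Fintype ι] (c : ι → ℝ) {δ : ι → ℝ}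
    (hδ : ∀ j, δ j ∈ Set.Icc (0 : ℝ) 1) : ∑ j, c j * δ j ≤ ∑ j, max 0 (c j) :=
  sum_le_sum fun j _ => by
    rcases le_total 0 (c j) with h | h
    · exact (mul_le_of_le_one_right h (hδ j).2).trans (le_max_right _ _)
    · exact (mul_nonpos_of_nonpos_of_nonneg h (hδ j).1).trans (le_max_left _ _)

lemma sum_max_zero_eq_sum_mul_indicator {ι : Type*} [Fintype ι] (c : ι → ℝ) :
    ∑ j, max 0 (c j) = ∑ j, c j * if 0 ≤ c j then 1 else 0 :=
  sum_congr rfl fun j _ => by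
    split_ifs with h
    · rw [max_eq_right h, mul_one]
    · rw [max_eq_left (not_le.1 h).le, mul_zero]

theorem sum_max_zero_le_of_maxPower_le {w v : ℕ} {E : Matrix (Fin 2) (Fin w) ℝ}
    {F : Matrix (Fin 2) (Fin v) ℝ} (hF : RowStochastic F)
    (hdom : ∀ x ∈ Set.Icc (0 : ℝ) 1, maxPower F x ≤ maxPower E x) {r : ℝ}
    (hr : r ∈ Set.Icc (0 : ℝ) 1) :
    ∑ k, max 0 (F 1 k - r * (F 0 k + F 1 k)) ≤ ∑ j, max 0 (E 1 j - r * (E 0 j + E 1 j)) := by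
  rcases hr.2.eq_or_lt with rfl | hr1
  · refine le_of_eq_of_le (sum_eq_zero fun k _ => ?_) (sum_nonneg fun j _ => le_max_left _ _)
    rw [max_eq_left (by linarith [hF.1 0 k])]
  have hexpand : ∀ {n : ℕ} (A : Matrix (Fin 2) (Fin n) ℝ) (δ : Fin n → ℝ),
      ∑ j, (A 1 j - r * (A 0 j + A 1 j)) * δ j =
        (1 - r) * ∑ j, A 1 j * δ j - r * ∑ j, A 0 j * δ j := fun A δ => by
    rw [mul_sum, mul_sum, ← sum_sub_distrib]
    exact sum_congr rfl fun j _ => by ring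
  -- the likelihood-ratio test of threshold `r` attains the hinge sum of `F`
  set ε : Fin v → ℝ := fun k => if 0 ≤ F 1 k - r * (F 0 k + F 1 k) then 1 else 0
  have hε : ∀ k, ε k ∈ Set.Icc (0 : ℝ) 1 := fun k => by simp only [ε]; split_ifs <;> norm_num
  set x := ∑ k, F 0 k * ε k
  have hx : x ∈ Set.Icc (0 : ℝ) 1 := ⟨sum_nonneg fun k _ => mul_nonneg (hF.1 0 k) (hε k).1,
    hF.2 0 ▸ sum_le_sum fun k _ => mul_le_of_le_one_right (hF.1 0 k) (hε k).2⟩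
  set H := ∑ j, max 0 (E 1 j - r * (E 0 j + E 1 j))
  have hE : maxPower E x ≤ (H + r * x) / (1 - r) := by
    refine maxPower_le hx.1 fun δ hδ hδx => (le_div_iff₀ (by linarith)).2 ?_
    have := sum_mul_le_sum_max_zero (fun j => E 1 j - r * (E 0 j + E 1 j)) hδ
    rw [hexpand] at this
    nlinarith [mul_le_mul_of_nonneg_left hδx hr.1]
  have hF' := (le_maxPower (hF.1 1) hε le_rfl).trans ((hdom x hx).trans hE)
  rw [sum_max_zero_eq_sum_mul_indicator, hexpand]
  linarith [(le_div_iff₀ (by linarith : (0 : ℝ) < 1 - r)).1 hF']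

/-- Per-bit code comparison: if the linear-program upper boundary of the equivalent transfer
matrix `E` dominates that of `F` on `[0,1]`, then `E` majorizes `F` (there is a row-stochastic
`M` with `E * M = F`), and consequently every randomized bit decoder for `F` is matched by one
for `E` with at most the same error probability at each bit value. -/
theorem per_bit_code_comparison
    (w v : ℕ) (E : Matrix (Fin 2) (Fin w) ℝ) (F : Matrix (Fin 2) (Fin v) ℝ)
    (hE : RowStochastic E) (hF : RowStochastic F)
    (hdom : ∀ x ∈ Set.Icc (0 : ℝ) 1,
      sSup {s : ℝ | ∃ ε : Fin v → ℝ, (∀ j, ε j ∈ Set.Icc (0 : ℝ) 1) ∧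
          (∑ j : Fin v, F 0 j * ε j) ≤ x ∧ s = ∑ j : Fin v, F 1 j * ε j} ≤
        sSup {s : ℝ | ∃ δ : Fin w → ℝ, (∀ j, δ j ∈ Set.Icc (0 : ℝ) 1) ∧
          (∑ j : Fin w, E 0 j * δ j) ≤ x ∧ s = ∑ j : Fin w, E 1 j * δ j}) :
    (∃ M : Matrix (Fin w) (Fin v) ℝ, RowStochastic M ∧ E * M = F) ∧
      ∀ R : Matrix (Fin v) (Fin 2) ℝ, RowStochastic R →
        ∃ S : Matrix (Fin w) (Fin 2) ℝ, RowStochastic S ∧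
          ∀ i : Fin 2,
            (∑ k : Fin w, E i k * S k (1 - i)) ≤ ∑ k : Fin v, F i k * R k (1 - i) := by
  have : Nonempty (Fin v) := by
    rcases v with _ | v
    · simpa using hF.2 0
    · exact ⟨0⟩
  obtain ⟨M, hM, hEM⟩ := exists_rowStochastic_mul_eq_of_bayesValue_le E F
    (bayesValue_le_bayesValue_of_hinge hE.1 hF.1 (by rw [hF.2 0, hE.2 0])
      (by rw [hF.2 1, hE.2 1]) fun r hr => sum_max_zero_le_of_maxPower_le hF hdom hr)
  refine ⟨⟨M, hM, hEM⟩, fun R hR => ⟨M * R, hM.mul hR, fun i => le_of_eq ?_⟩⟩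
  exact congrFun (congrFun (by rw [← Matrix.mul_assoc, hEM] : E * (M * R) = F * R) i) (1 - i)
end
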